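/- Fix an integer N ≥ 1 and parameters A = (a₃, a₅, …, a_{2N−1}) ∈ ℂ^{N−1}. If every parameter a_{2k+1} (1 ≤ k ≤ N−1) is purely imaginary, then the N-th order lump satisfies the space–time reflection symmetry u_N(x, y, t; A) = u_N(−x, y, −t; A) for all (x,y,t) ∈ ℝ³. -/

import Mathlib

open Complex

/-- Schur polynomials `S_k(v)` of a sequence `v` (entries indexed from 1), defined by the
generating identity `Σ_{k≥0} S_k(v) λ^k = exp(Σ_{j≥1} v_j λ^j)` (equivalently, by
`S_0 = 1` together with the recursion `k S_k = Σ_{j=1}^{k} j v_j S_{k−j}` obtained by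
differentiating the generating identity). -/
noncomputable def schurPoly (v : ℕ → ℂ) : ℕ → ℂ
  | 0 => 1
  | k + 1 =>
      ((k : ℂ) + 1)⁻¹ *
        ∑ j ∈ Finset.range (k + 1), ((j : ℂ) + 1) * v (j + 1) * schurPoly v (k - j)
  decreasing_by exact Nat.lt_succ_of_le (Nat.sub_le k j)

/-- The sequence `s = (s₁, s₂, …)` defined by `Σ_{j≥1} s_j λ^j = log((2/λ) tanh(λ/2))`:
`s_j` is the `j`-th Taylor coefficient at `0` of `λ ↦ log((2/λ) tanh(λ/2))` (the
function being extended by its removable-singularity value `1` inside the logarithm). -/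
noncomputable def sSeq (j : ℕ) : ℂ :=
  iteratedDeriv j
    (fun l : ℂ => Complex.log (if l = 0 then 1 else (2 / l) * Complex.tanh (l / 2))) 0
    / (j.factorial : ℂ)

/-- The sequence `x⁺(n)`:  first entry `x + 3t + 2iy + n`, odd entries
`x⁺_{2k+1} = (x + 2^{2k+1} i y + 3^{2k+1} t)/(2k+1)! + a_{2k+1}` (the parameter
`a_{2k+1}` is `a k`), and even entries zero. -/
noncomputable def xPlus (a : ℕ → ℂ) (n : ℕ) (x y t : ℝ) (j : ℕ) : ℂ :=
  if j = 1 then (x : ℂ) + 3 * (t : ℂ) + 2 * I * (y : ℂ) + (n : ℂ)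
  else if j % 2 = 1 then
    ((x : ℂ) + 2 ^ j * I * (y : ℂ) + 3 ^ j * (t : ℂ)) / (j.factorial : ℂ) + a ((j - 1) / 2)
  else 0

/-- The sequence `x⁻(n)`:  first entry `x + 3t − 2iy − n`, odd entries
`x⁻_{2k+1} = (x − 2^{2k+1} i y + 3^{2k+1} t)/(2k+1)! + conj(a_{2k+1})`, and even
entries zero. -/
noncomputable def xMinus (a : ℕ → ℂ) (n : ℕ) (x y t : ℝ) (j : ℕ) : ℂ :=
  if j = 1 then (x : ℂ) + 3 * (t : ℂ) - 2 * I * (y : ℂ) - (n : ℂ)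
  else if j % 2 = 1 then
    ((x : ℂ) - 2 ^ j * I * (y : ℂ) + 3 ^ j * (t : ℂ)) / (j.factorial : ℂ)
      + starRingEnd ℂ (a ((j - 1) / 2))
  else 0

/-- `τ^{(n)}_{i,j} = (−1)^n Σ_{ν=0}^{min(i,j)} 4^{−ν} S_{i−ν}(x⁺(n)+νs) S_{j−ν}(x⁻(n)+νs)`. -/
noncomputable def tauLump (a : ℕ → ℂ) (n : ℕ) (x y t : ℝ) (i j : ℕ) : ℂ :=
  (-1 : ℂ) ^ n *
    ∑ ν ∈ Finset.range (min i j + 1),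
      ((4 : ℂ) ^ ν)⁻¹
        * schurPoly (fun l => xPlus a n x y t l + (ν : ℂ) * sSeq l) (i - ν)
        * schurPoly (fun l => xMinus a n x y t l + (ν : ℂ) * sSeq l) (j - ν)

/-- `σ_n(x,y,t;A) = det_{1≤i,j≤N}(τ^{(n)}_{2i−1,2j−1})`. -/
noncomputable def sigmaLump (N : ℕ) (a : ℕ → ℂ) (n : ℕ) (x y t : ℝ) : ℂ :=
  (Matrix.of fun i j : Fin N =>
    tauLump a n x y t (2 * (i : ℕ) + 1) (2 * (j : ℕ) + 1)).det

/-- The `N`-th order lump `u_N(x,y,t;A) = |σ₁/σ₀|² − 1`. -/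
noncomputable def uLump (N : ℕ) (a : ℕ → ℂ) (x y t : ℝ) : ℝ :=
  ‖sigmaLump N a 1 x y t / sigmaLump N a 0 x y t‖ ^ 2 - 1

/-- The first-order lump profile `L(X,Y)`. -/
noncomputable def lumpProfile (X Y : ℝ) : ℝ :=
  (-32 * X ^ 2 + 128 * Y ^ 2 + 8) / ((4 * X ^ 2 + 16 * Y ^ 2 + 1) ^ 2)

/-! Under `(x, t) ↦ (-x, -t)` the sequence `x⁺` becomes `(-1)^j x⁻` (and vice versa) when the
parameters are purely imaginary. Since `log((2/λ) tanh(λ/2))` is even, `s` has no odd terms, so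
the same holds for `x^± + ν s`; and `S_k` is weighted homogeneous,
`S_k((-1)^j v_j) = (-1)^k S_k(v)`.
Hence `τ_{ij}` turns into `(-1)^{i+j} τ_{ji}`: for the odd indices of `σ_n` the sign is `+1`, so the
τ-matrix is replaced by its transpose and `σ_n`, and with it `u_N`, is unchanged. -/

lemma Function.Even.iteratedDeriv_eq_zero_of_odd {𝕜 F : Type*} [RCLike 𝕜] [NormedAddCommGroup F]
    [NormedSpace 𝕜 F] {f : 𝕜 → F} (hf : f.Even) {n : ℕ} (hn : Odd n) :
    iteratedDeriv n f 0 = 0 := by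
  have h := iteratedDeriv_comp_neg n f 0
  rw [funext hf, neg_zero, hn.neg_one_pow, neg_one_smul] at h
  have h2 : (2 : 𝕜) • iteratedDeriv n f 0 = 0 := by
    rw [two_smul]
    nth_rewrite 2 [h]
    exact add_neg_cancel _
  exact (smul_eq_zero.mp h2).resolve_left two_ne_zero

lemma sSeq_eq_zero_of_odd {j : ℕ} (hj : Odd j) : sSeq j = 0 := by
  have heven : Function.Even
      (fun l : ℂ => Complex.log (if l = 0 then 1 else (2 / l) * Complex.tanh (l / 2))) := by
    intro l
    rcases eq_or_ne l 0 with rfl | hl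
    · simp
    · simp only [if_neg (neg_ne_zero.mpr hl), if_neg hl, neg_div, Complex.tanh_neg, div_neg,
        neg_mul_neg]
  rw [sSeq, heven.iteratedDeriv_eq_zero_of_odd hj, zero_div]

lemma neg_one_pow_mul_sSeq (j : ℕ) : (-1 : ℂ) ^ j * sSeq j = sSeq j := by
  rcases j.even_or_odd with hj | hj
  · rw [hj.neg_one_pow, one_mul]
  · rw [sSeq_eq_zero_of_odd hj, mul_zero]

lemma schurPoly_pow_mul (c : ℂ) (v : ℕ → ℂ) (k : ℕ) :
    schurPoly (fun j => c ^ j * v j) k = c ^ k * schurPoly v k := by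
  induction k using Nat.strong_induction_on with
  | _ k ih =>
    match k with
    | 0 => simp [schurPoly]
    | k + 1 =>
      rw [schurPoly, schurPoly, mul_left_comm (c ^ (k + 1)), Finset.mul_sum _ _ (c ^ (k + 1))]
      congr 1
      refine Finset.sum_congr rfl fun j hj => ?_
      have hjk : j + 1 + (k - j) = k + 1 := by grind
      rw [ih (k - j) (by omega), ← hjk, pow_add]
      ring

lemma schurPoly_add_mul_sSeq_of_neg_one_pow {u w : ℕ → ℂ} (h : ∀ l, u l = (-1) ^ l * w l)
    (c : ℂ) (k : ℕ) :
    schurPoly (fun l => u l + c * sSeq l) k =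
      (-1) ^ k * schurPoly (fun l => w l + c * sSeq l) k := by
  have hv : (fun l => u l + c * sSeq l) = fun l => (-1) ^ l * (w l + c * sSeq l) := by
    funext l
    rw [h, mul_add, mul_left_comm, neg_one_pow_mul_sSeq]
  rw [hv, schurPoly_pow_mul]

section Reflection

variable {a : ℕ → ℂ} (n : ℕ) (x y t : ℝ)

lemma xPlus_neg_neg (ha : ∀ k, 1 ≤ k → (a k).re = 0) (j : ℕ) :
    xPlus a n (-x) y (-t) j = (-1) ^ j * xMinus a n x y t j := by
  unfold xPlus xMinus
  rcases eq_or_ne j 1 with rfl | hj1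
  · simp only [if_true]
    push_cast
    ring
  rcases Nat.even_or_odd j with hj | hj
  · simp [hj1, Nat.even_iff.mp hj]
  · have hk : 1 ≤ (j - 1) / 2 := by
      obtain ⟨m, rfl⟩ := hj
      omega
    have hconj : starRingEnd ℂ (a ((j - 1) / 2)) = -a ((j - 1) / 2) :=
      Complex.ext (by simp [ha _ hk]) (by simp)
    simp only [if_neg hj1, if_pos (Nat.odd_iff.mp hj), hconj, hj.neg_one_pow]
    push_cast
    ring

lemma xMinus_neg_neg (ha : ∀ k, 1 ≤ k → (a k).re = 0) (j : ℕ) :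
    xMinus a n (-x) y (-t) j = (-1) ^ j * xPlus a n x y t j := by
  have h := xPlus_neg_neg n (-x) y (-t) ha j
  rw [neg_neg, neg_neg] at h
  rw [h, ← mul_assoc, ← mul_pow, neg_one_mul, neg_neg, one_pow, one_mul]

lemma tauLump_neg_neg (ha : ∀ k, 1 ≤ k → (a k).re = 0) (i j : ℕ) :
    tauLump a n (-x) y (-t) i j = (-1) ^ (i + j) * tauLump a n x y t j i := by
  rw [tauLump, tauLump, min_comm j i, mul_left_comm, Finset.mul_sum _ _ ((-1) ^ (i + j))]
  congr 1
  refine Finset.sum_congr rfl fun ν hν => ?_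
  have hsum : i - ν + (j - ν) + 2 * ν = i + j := by grind
  have hsign : (-1 : ℂ) ^ (i - ν) * (-1) ^ (j - ν) = (-1) ^ (i + j) := by
    rw [← pow_add, ← hsum, pow_add _ _ (2 * ν), pow_mul, neg_one_sq, one_pow, mul_one]
  rw [schurPoly_add_mul_sSeq_of_neg_one_pow (xPlus_neg_neg n x y t ha),
    schurPoly_add_mul_sSeq_of_neg_one_pow (xMinus_neg_neg n x y t ha), ← hsign]
  ring

lemma sigmaLump_neg_neg (N : ℕ) (ha : ∀ k, 1 ≤ k → (a k).re = 0) :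
    sigmaLump N a n (-x) y (-t) = sigmaLump N a n x y t := by
  rw [sigmaLump, sigmaLump, ← Matrix.det_transpose]
  congr 1
  ext i j
  have hsign : (-1 : ℂ) ^ (2 * (j : ℕ) + 1 + (2 * (i : ℕ) + 1)) = 1 :=
    Even.neg_one_pow ⟨i + j + 1, by ring⟩
  rw [Matrix.transpose_apply, Matrix.of_apply, Matrix.of_apply, tauLump_neg_neg n x y t ha,
    hsign, one_mul]

end Reflection

theorem lump_reflection_symmetry_general (N : ℕ) (a : ℕ → ℂ)
    (ha : ∀ k, N ≤ k → a k = 0)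
    (haIm : ∀ k, 1 ≤ k → k ≤ N - 1 → (a k).re = 0) :
    ∀ x y t : ℝ, uLump N a x y t = uLump N a (-x) y (-t) := by
  have hre : ∀ k, 1 ≤ k → (a k).re = 0 := fun k hk =>
    if hkN : k ≤ N - 1 then haIm k hk hkN else by rw [ha k (by omega), zero_re]
  intro x y t
  rw [uLump, uLump, sigmaLump_neg_neg 0 x y t N hre, sigmaLump_neg_neg 1 x y t N hre]

/-- if all parameters `a_{2k+1}` (`1 ≤ k ≤ N−1`) are purely imaginary,
then the `N`-th order lump satisfies the space–time reflection symmetry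
`u_N(x, y, t; A) = u_N(−x, y, −t; A)`. -/
theorem lump_reflection_symmetry (N : ℕ) (hN : 1 ≤ N) (a : ℕ → ℂ)
    (ha : ∀ k, N ≤ k → a k = 0)
    (haIm : ∀ k, 1 ≤ k → k ≤ N - 1 → (a k).re = 0) :
    ∀ x y t : ℝ, uLump N a x y t = uLump N a (-x) y (-t) :=
  lump_reflection_symmetry_general N a ha haIm
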